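/- arXiv:2006.00502 — 2 statements merged into one kernel-verified Lean document; each statement's English description precedes it below -/
import Mathlib

section
/- Discrete Gronwall lemma: Let k, B ≥ 0 and let (aₙ), (bₙ), (cₙ), (γₙ) be sequences of nonnegative reals such that for all n ≥ 0, aₙ + k·∑_{μ=0}^{n} bμ ≤ k·∑_{μ=0}^{n} γμ aμ + k·∑_{μ=0}^{n} cμ + B. Suppose kγμ < 1 for all μ and set σμ = (1 − kγμ)⁻¹. Then for all n ≥ 0, aₙ + k·∑_{μ=0}^{n} bμ ≤ exp(k·∑_{μ=0}^{n} σμ γμ) · (k·∑_{μ=0}^{n} cμ + B). -/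
/-!
Put `S m = ∑_{μ < m} w_μ u_μ + C`. The implicit hypothesis `u_m ≤ S (m + 1)` turns
`S (m + 1) = S m + w_m u_m` into `(1 - w_m) S (m + 1) ≤ S m`, so each step multiplies the bound
by at most `(1 - w_m)⁻¹ = 1 + w_m (1 - w_m)⁻¹ ≤ exp (w_m (1 - w_m)⁻¹)`. The discrete Gronwall
lemma is the case `u_m = a_m + k ∑_{μ ≤ m} b_μ`, `w_μ = k γ_μ`, with `C = k ∑_{μ ≤ n} c_μ + B`
the right-hand side at the last index, which dominates those at the earlier ones.
-/

namespace Gronwall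

open Finset

theorem inv_one_sub_le_exp {x : ℝ} (hx : x < 1) : (1 - x)⁻¹ ≤ Real.exp (x * (1 - x)⁻¹) :=
  calc (1 - x)⁻¹ = x * (1 - x)⁻¹ + 1 := by field_simp [(sub_pos.2 hx).ne']; ring
    _ ≤ Real.exp (x * (1 - x)⁻¹) := Real.add_one_le_exp _

theorem prod_inv_one_sub_le_exp_sum {ι : Type*} (s : Finset ι) {x : ι → ℝ}
    (hx : ∀ i ∈ s, x i < 1) :
    ∏ i ∈ s, (1 - x i)⁻¹ ≤ Real.exp (∑ i ∈ s, x i * (1 - x i)⁻¹) := by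
  rw [Real.exp_sum]
  exact prod_le_prod (fun i hi => (inv_pos.2 (sub_pos.2 (hx i hi))).le)
    fun i hi => inv_one_sub_le_exp (hx i hi)

section ImplicitGronwall

variable {u w : ℕ → ℝ} {C : ℝ} {n : ℕ}

theorem le_prod_inv_one_sub_mul (hw₀ : ∀ m, 0 ≤ w m) (hw₁ : ∀ m, w m < 1)
    (hu : ∀ m ≤ n, u m ≤ ∑ μ ∈ range (m + 1), w μ * u μ + C) :
    u n ≤ (∏ μ ∈ range (n + 1), (1 - w μ)⁻¹) * C := by
  have partial_sum_le : ∀ m ≤ n + 1,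
      ∑ μ ∈ range m, w μ * u μ + C ≤ (∏ μ ∈ range m, (1 - w μ)⁻¹) * C := by
    intro m hm
    induction m with
    | zero => simp
    | succ m ih =>
      have hpos : 0 < 1 - w m := sub_pos.2 (hw₁ m)
      have hstep : (1 - w m) * (∑ μ ∈ range (m + 1), w μ * u μ + C) ≤
          ∑ μ ∈ range m, w μ * u μ + C := by
        have hum := hu m (by omega)
        rw [sum_range_succ] at hum ⊢
        nlinarith [hw₀ m]
      calc ∑ μ ∈ range (m + 1), w μ * u μ + C
          ≤ (1 - w m)⁻¹ * (∑ μ ∈ range m, w μ * u μ + C) := (le_inv_mul_iff₀ hpos).2 hstep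
        _ ≤ (1 - w m)⁻¹ * ((∏ μ ∈ range m, (1 - w μ)⁻¹) * C) :=
          mul_le_mul_of_nonneg_left (ih (by omega)) (inv_pos.2 hpos).le
        _ = (∏ μ ∈ range (m + 1), (1 - w μ)⁻¹) * C := by rw [prod_range_succ]; ring
  exact (hu n le_rfl).trans (partial_sum_le (n + 1) le_rfl)

theorem le_exp_sum_mul (hC : 0 ≤ C) (hw₀ : ∀ m, 0 ≤ w m) (hw₁ : ∀ m, w m < 1)
    (hu : ∀ m ≤ n, u m ≤ ∑ μ ∈ range (m + 1), w μ * u μ + C) :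
    u n ≤ Real.exp (∑ μ ∈ range (n + 1), w μ * (1 - w μ)⁻¹) * C :=
  (le_prod_inv_one_sub_mul hw₀ hw₁ hu).trans <|
    mul_le_mul_of_nonneg_right (prod_inv_one_sub_le_exp_sum _ fun m _ => hw₁ m) hC

end ImplicitGronwall

open Finset in
theorem discrete_gronwall_general
    (k B : ℝ) (a b c γ σ : ℕ → ℝ)
    (hk : 0 ≤ k) (hB : 0 ≤ B)
    (hb : ∀ n, 0 ≤ b n) (hc : ∀ n, 0 ≤ c n)
    (hγ : ∀ n, 0 ≤ γ n)
    (hkγ : ∀ μ, k * γ μ < 1)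
    (hσ : ∀ μ, σ μ = (1 - k * γ μ)⁻¹)
    (H : ∀ n, a n + k * ∑ μ ∈ range (n + 1), b μ ≤
      k * ∑ μ ∈ range (n + 1), γ μ * a μ + k * ∑ μ ∈ range (n + 1), c μ + B) :
    ∀ n, a n + k * ∑ μ ∈ range (n + 1), b μ ≤
      Real.exp (k * ∑ μ ∈ range (n + 1), σ μ * γ μ) *
        (k * ∑ μ ∈ range (n + 1), c μ + B) := by
  intro n
  have hkγ₀ : ∀ μ, 0 ≤ k * γ μ := fun μ => mul_nonneg hk (hγ μ)
  have hc_le : ∀ m ≤ n, k * ∑ μ ∈ range (m + 1), c μ ≤ k * ∑ μ ∈ range (n + 1), c μ :=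
    fun m hm => mul_le_mul_of_nonneg_left (sum_le_sum_of_subset_of_nonneg
      (range_subset_range.2 (by omega)) fun μ _ _ => hc μ) hk
  set u : ℕ → ℝ := fun m => a m + k * ∑ μ ∈ range (m + 1), b μ
  have ha_le : ∀ m, a m ≤ u m :=
    fun m => le_add_of_nonneg_right (mul_nonneg hk (sum_nonneg fun μ _ => hb μ))
  have hu : ∀ m ≤ n,
      u m ≤ ∑ μ ∈ range (m + 1), k * γ μ * u μ + (k * ∑ μ ∈ range (n + 1), c μ + B) := by
    intro m hm
    have hγa : k * ∑ μ ∈ range (m + 1), γ μ * a μ ≤ ∑ μ ∈ range (m + 1), k * γ μ * u μ := by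
      rw [mul_sum]
      exact sum_le_sum fun μ _ => by
        rw [← mul_assoc]; exact mul_le_mul_of_nonneg_left (ha_le μ) (hkγ₀ μ)
    linarith [H m, hc_le m hm]
  have hexponent : k * ∑ μ ∈ range (n + 1), σ μ * γ μ =
      ∑ μ ∈ range (n + 1), k * γ μ * (1 - k * γ μ)⁻¹ := by
    rw [mul_sum]
    exact sum_congr rfl fun μ _ => by rw [hσ]; ring
  rw [hexponent]
  exact le_exp_sum_mul (add_nonneg (mul_nonneg hk (sum_nonneg fun μ _ => hc μ)) hB) hkγ₀ hkγ hu

open Finset in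
/-- Discrete Gronwall lemma. -/
theorem discrete_gronwall
    (k B : ℝ) (a b c γ σ : ℕ → ℝ)
    (hk : 0 ≤ k) (hB : 0 ≤ B)
    (ha : ∀ n, 0 ≤ a n) (hb : ∀ n, 0 ≤ b n) (hc : ∀ n, 0 ≤ c n)
    (hγ : ∀ n, 0 ≤ γ n)
    (hkγ : ∀ μ, k * γ μ < 1)
    (hσ : ∀ μ, σ μ = (1 - k * γ μ)⁻¹)
    (H : ∀ n, a n + k * ∑ μ ∈ range (n + 1), b μ ≤
      k * ∑ μ ∈ range (n + 1), γ μ * a μ + k * ∑ μ ∈ range (n + 1), c μ + B) :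
    ∀ n, a n + k * ∑ μ ∈ range (n + 1), b μ ≤
      Real.exp (k * ∑ μ ∈ range (n + 1), σ μ * γ μ) *
        (k * ∑ μ ∈ range (n + 1), c μ + B) :=
  discrete_gronwall_general k B a b c γ σ hk hB hb hc hγ hkγ hσ H
end Gronwall
end

section
/- Error estimate for the Stokes projection: Under the discrete inf-sup condition, the Stokes projection ũ of (u,p) satisfies (ν+h)‖∇(u − ũ)‖² ≤ C[(ν+h) · inf_{v^h ∈ V^h} ‖∇(u − v^h)‖² + (ν+h)⁻¹ · inf_{q^h ∈ Q^h} ‖p − q^h‖²], with C independent of h and ν. -/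
open RealInnerProductSpace

/- The velocity error is tested against `v - ut ∈ V^h`, which splits it into a best-approximation
part `u - v` and a pressure part `⟪p - q, ∇·(v - ut)⟫`; Young's inequality absorbs the error on
the right-hand side and leaves `3 (ν + h) ‖∇(u - v)‖² + 3 d (ν + h)⁻¹ ‖p - q‖²`. Taking the
infimum over `v ∈ V^h` and `q ∈ Q^h` gives the estimate. -/

theorem sq_le_of_le_mul_add_mul_add {s a b c k : ℝ} (hs : 0 < s)
    (h : s * a ^ 2 ≤ s * (a * b) + c * k * (a + b)) :
    s * a ^ 2 ≤ 3 * s * b ^ 2 + 3 * k ^ 2 * s⁻¹ * c ^ 2 := by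
  rw [← mul_le_mul_iff_right₀ hs]
  have hrhs : s * (3 * s * b ^ 2 + 3 * k ^ 2 * s⁻¹ * c ^ 2)
      = 3 * (s * b) ^ 2 + 3 * (c * k) ^ 2 := by
    field_simp
  rw [hrhs]
  nlinarith [mul_le_mul_of_nonneg_left h hs.le, sq_nonneg (s * a - 2 * s * b),
    sq_nonneg (s * a - 2 * (c * k)), sq_nonneg (s * b - c * k)]

section Galerkin

variable {X Q : Type*} [NormedAddCommGroup X] [InnerProductSpace ℝ X]
  [NormedAddCommGroup Q] [InnerProductSpace ℝ Q]

theorem mul_norm_sub_sq_le_of_inner_eq {T : X →ₗ[ℝ] Q} {K s : ℝ} (hK : 0 ≤ K)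
    (hT : ∀ v, ‖T v‖ ≤ K * ‖v‖) (hs : 0 < s) {u ut v : X} {p q : Q}
    (horth : s * ⟪u - ut, v - ut⟫ - ⟪p - q, T (v - ut)⟫ = 0) :
    s * ‖u - ut‖ ^ 2 ≤ 3 * s * ‖u - v‖ ^ 2 + 3 * K ^ 2 * s⁻¹ * ‖p - q‖ ^ 2 := by
  refine sq_le_of_le_mul_add_mul_add hs ?_
  have hsplit : u - ut = (u - v) + (v - ut) := by abel
  have hvut : ‖v - ut‖ ≤ ‖u - ut‖ + ‖u - v‖ := by
    simpa [norm_sub_rev v u, add_comm] using norm_sub_le_norm_sub_add_norm_sub v u ut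
  have hpressure : ⟪p - q, T (v - ut)⟫ ≤ ‖p - q‖ * K * (‖u - ut‖ + ‖u - v‖) :=
    calc ⟪p - q, T (v - ut)⟫ ≤ ‖p - q‖ * ‖T (v - ut)‖ := real_inner_le_norm _ _
      _ ≤ ‖p - q‖ * (K * (‖u - ut‖ + ‖u - v‖)) := by
        gcongr
        exact (hT _).trans (by gcongr)
      _ = _ := by ring
  calc s * ‖u - ut‖ ^ 2 = s * ⟪u - ut, u - v⟫ + s * ⟪u - ut, v - ut⟫ := by
        rw [← real_inner_self_eq_norm_sq, ← mul_add, ← inner_add_right, ← hsplit]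
    _ = s * ⟪u - ut, u - v⟫ + ⟪p - q, T (v - ut)⟫ := by linarith
    _ ≤ s * (‖u - ut‖ * ‖u - v‖) + ‖p - q‖ * K * (‖u - ut‖ + ‖u - v‖) := by
        gcongr
        exact real_inner_le_norm _ _

end Galerkin

theorem stokes_projection_error_general
    {X Q : Type*} [NormedAddCommGroup X] [InnerProductSpace ℝ X]
    [NormedAddCommGroup Q] [InnerProductSpace ℝ Q]
    (d : ℕ)
    (dvg : X →ₗ[ℝ] Q)
    (hdiv : ∀ v : X, ‖dvg v‖ ^ 2 ≤ (d : ℝ) * ‖v‖ ^ 2)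
    (Qh : Submodule ℝ Q)
    (Vh : Submodule ℝ X) :
    ∃ C : ℝ, 0 < C ∧
      ∀ (ν h : ℝ), 0 < ν → 0 < h → ∀ (u ut : X) (p : Q), ut ∈ Vh →
        (∀ vh ∈ Vh, ∀ qh ∈ Qh,
          (ν + h) * ⟪u - ut, vh⟫ - ⟪p - qh, dvg vh⟫ = 0) →
        (ν + h) * ‖u - ut‖ ^ 2 ≤
          C * ((ν + h) * (⨅ vh : Vh, ‖u - (vh : X)‖ ^ 2) +
            (ν + h)⁻¹ * ⨅ qh : Qh, ‖p - (qh : Q)‖ ^ 2) := by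
  set C : ℝ := 3 * (d + 1) with hC
  refine ⟨C, by positivity, fun ν h hν hh u ut p hut horth => ?_⟩
  have hs : 0 < ν + h := by positivity
  have hdvg : ∀ v, ‖dvg v‖ ≤ √d * ‖v‖ := fun v => by
    rw [← Real.sqrt_sq (norm_nonneg v), ← Real.sqrt_mul (Nat.cast_nonneg d)]
    exact Real.le_sqrt_of_sq_le (hdiv v)
  have : Nonempty Vh := ⟨⟨ut, hut⟩⟩
  have pointwise : ∀ (vh : Vh) (qh : Qh), (ν + h) * ‖u - ut‖ ^ 2 ≤
      C * (ν + h) * ‖u - (vh : X)‖ ^ 2 + C * (ν + h)⁻¹ * ‖p - (qh : Q)‖ ^ 2 := fun vh qh => by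
    refine (mul_norm_sub_sq_le_of_inner_eq (Real.sqrt_nonneg d) hdvg hs
      (horth _ (Vh.sub_mem vh.2 hut) _ qh.2)).trans ?_
    rw [Real.sq_sqrt (Nat.cast_nonneg d)]
    gcongr <;> linarith [(Nat.cast_nonneg d : (0 : ℝ) ≤ d)]
  calc (ν + h) * ‖u - ut‖ ^ 2
      ≤ (⨅ vh : Vh, C * (ν + h) * ‖u - (vh : X)‖ ^ 2) +
          ⨅ qh : Qh, C * (ν + h)⁻¹ * ‖p - (qh : Q)‖ ^ 2 :=
        le_ciInf_add_ciInf pointwise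
    _ = _ := by
        rw [← Real.mul_iInf_of_nonneg (by positivity), ← Real.mul_iInf_of_nonneg (by positivity)]
        ring

/-- Error estimate for the modified Stokes projection under the discrete
inf-sup condition.  Setting as in the stability statement: `X` carries the
gradient inner product (so `‖v‖ = ‖∇v‖`), `dvg` is the divergence with
`‖∇·v‖² ≤ d‖∇v‖²`, `V^h = {v ∈ X^h : (q^h, ∇·v) = 0 ∀ q^h ∈ Q^h}`, and the
inf-sup constant `β^h > 0`.  There is a constant `C`, independent of `h`
and `ν` (i.e. uniform over all `ν, h > 0` and Stokes projections `ut`), with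
`(ν+h)‖∇(u-ut)‖² ≤ C[(ν+h) inf_{v^h∈V^h}‖∇(u-v^h)‖²
  + (ν+h)⁻¹ inf_{q^h∈Q^h}‖p-q^h‖²]`. -/
theorem stokes_projection_error
    {X Q : Type*} [NormedAddCommGroup X] [InnerProductSpace ℝ X]
    [NormedAddCommGroup Q] [InnerProductSpace ℝ Q]
    (d : ℕ) (hd : d = 2 ∨ d = 3)
    (dvg : X →ₗ[ℝ] Q)
    (hdiv : ∀ v : X, ‖dvg v‖ ^ 2 ≤ (d : ℝ) * ‖v‖ ^ 2)
    (Xh : Submodule ℝ X) (Qh : Submodule ℝ Q)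
    (Vh : Submodule ℝ X)
    (hVh : ∀ v : X, v ∈ Vh ↔ v ∈ Xh ∧ ∀ qh ∈ Qh, ⟪(qh : Q), dvg v⟫ = 0)
    (β : ℝ) (hβ : 0 < β)
    (hinfsup : ∀ qh ∈ Qh, qh ≠ 0 → ∃ vh ∈ Xh, vh ≠ 0 ∧
      β * ‖vh‖ * ‖qh‖ ≤ ⟪qh, dvg vh⟫) :
    ∃ C : ℝ, 0 < C ∧
      ∀ (ν h : ℝ), 0 < ν → 0 < h → ∀ (u ut : X) (p : Q), ut ∈ Vh →
        (∀ vh ∈ Vh, ∀ qh ∈ Qh,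
          (ν + h) * ⟪u - ut, vh⟫ - ⟪p - qh, dvg vh⟫ = 0) →
        (ν + h) * ‖u - ut‖ ^ 2 ≤
          C * ((ν + h) * (⨅ vh : Vh, ‖u - (vh : X)‖ ^ 2) +
            (ν + h)⁻¹ * ⨅ qh : Qh, ‖p - (qh : Q)‖ ^ 2) :=
  stokes_projection_error_general d dvg hdiv Qh Vh
end
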